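/- For k ∈ (0,1) and K_a with |K_a| = (1-k^2)k^{2k^2/(1-k^2)}, the equation sign(v)(1 - v^2)|v|^{2k^2/(1-k^2)} = K_a has exactly one solution in [-1,1], namely v = k if K_a > 0 and v = -k if K_a < 0. -/

import Mathlib

/-!
On `(0, 1]` the function `g` agrees with `h(v) = (1 - v²) v^α`, `α = 2k²/(1 - k²)`, and
`h'(v) = v^(α-1) (α - (α + 2) v²)` vanishes only at `v = k`, because `(α + 2) k² = α`.
So `(1 - k²) k^α` is the strict maximum of `g` on `[-1, 1]`, attained only at `k`, while
`g ≤ 0` on `[-1, 0]`. As `g` is odd, `-(1 - k²) k^α` is attained only at `-k`.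
-/

open Set

noncomputable def gfun (k v : ℝ) : ℝ :=
  Real.sign v * (1 - v^2) * |v| ^ (2*k^2/(1-k^2))

section OneSubSqMulRpow

variable {a c : ℝ}

theorem hasDerivAt_one_sub_sq_mul_rpow {x : ℝ} (hx : x ≠ 0) :
    HasDerivAt (fun v : ℝ => (1 - v ^ 2) * v ^ a) (x ^ (a - 1) * (a - (a + 2) * x ^ 2)) x := by
  have h := ((hasDerivAt_pow 2 x).const_sub 1).mul (Real.hasDerivAt_rpow_const (p := a) (Or.inl hx))
  refine h.congr_deriv ?_
  rw [show x ^ a = x ^ (a - 1) * x by rw [← Real.rpow_add_one hx]; ring_nf]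
  push_cast
  ring

theorem continuous_one_sub_sq_mul_rpow (ha : 0 ≤ a) :
    Continuous (fun v : ℝ => (1 - v ^ 2) * v ^ a) :=
  (continuous_const.sub (continuous_pow 2)).mul (Real.continuous_rpow_const ha)

theorem strictMonoOn_one_sub_sq_mul_rpow (ha : 0 ≤ a) (hac : (a + 2) * c ^ 2 = a) :
    StrictMonoOn (fun v : ℝ => (1 - v ^ 2) * v ^ a) (Icc 0 c) := by
  refine strictMonoOn_of_deriv_pos (convex_Icc 0 c)
    (continuous_one_sub_sq_mul_rpow ha).continuousOn fun x hx => ?_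
  rw [interior_Icc] at hx
  rw [(hasDerivAt_one_sub_sq_mul_rpow hx.1.ne').deriv]
  have := mul_lt_mul_of_pos_left (pow_lt_pow_left₀ hx.2 hx.1.le two_ne_zero)
    (by linarith : 0 < a + 2)
  have : 0 < a - (a + 2) * x ^ 2 := by linarith
  exact mul_pos (Real.rpow_pos_of_pos hx.1 _) this

theorem strictAntiOn_one_sub_sq_mul_rpow (ha : 0 ≤ a) (hc : 0 ≤ c)
    (hac : (a + 2) * c ^ 2 = a) :
    StrictAntiOn (fun v : ℝ => (1 - v ^ 2) * v ^ a) (Ici c) := by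
  refine strictAntiOn_of_deriv_neg (convex_Ici c)
    (continuous_one_sub_sq_mul_rpow ha).continuousOn fun x hx => ?_
  rw [interior_Ici] at hx
  have hx0 : 0 < x := hc.trans_lt hx
  rw [(hasDerivAt_one_sub_sq_mul_rpow hx0.ne').deriv]
  have := mul_lt_mul_of_pos_left (pow_lt_pow_left₀ (mem_Ioi.mp hx) hc two_ne_zero)
    (by linarith : 0 < a + 2)
  have : a - (a + 2) * x ^ 2 < 0 := by linarith
  exact mul_neg_of_pos_of_neg (Real.rpow_pos_of_pos hx0 _) this

theorem one_sub_sq_mul_rpow_lt_of_ne (ha : 0 ≤ a) (hc : 0 ≤ c) (hac : (a + 2) * c ^ 2 = a)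
    {v : ℝ} (hv : 0 ≤ v) (hne : v ≠ c) :
    (1 - v ^ 2) * v ^ a < (1 - c ^ 2) * c ^ a := by
  rcases hne.lt_or_gt with h | h
  · exact strictMonoOn_one_sub_sq_mul_rpow ha hac ⟨hv, h.le⟩ ⟨hc, le_rfl⟩ h
  · exact strictAntiOn_one_sub_sq_mul_rpow ha hc hac (le_refl c) (mem_Ici.mpr h.le) h

end OneSubSqMulRpow

section Gfun

variable {k v : ℝ}

theorem gfun_neg (k v : ℝ) : gfun k (-v) = -gfun k v := by
  simp only [gfun, Real.sign_neg, abs_neg]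
  ring

theorem gfun_of_pos (hv : 0 < v) : gfun k v = (1 - v ^ 2) * v ^ (2*k^2/(1-k^2)) := by
  rw [gfun, Real.sign_of_pos hv, abs_of_pos hv, one_mul]

theorem gfun_nonpos (hv : v ∈ Icc (-1 : ℝ) 0) : gfun k v ≤ 0 := by
  rcases hv.2.eq_or_lt with rfl | hneg
  · simp [gfun]
  · rw [gfun, Real.sign_of_neg hneg]
    have : 0 ≤ 1 - v ^ 2 := by nlinarith [hv.1]
    have := Real.rpow_nonneg (abs_nonneg v) (2*k^2/(1-k^2))
    nlinarith

theorem eq_of_gfun_eq (hk : k ∈ Ioo (0 : ℝ) 1) (hv : v ∈ Icc (-1 : ℝ) 1)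
    (h : gfun k v = (1 - k^2) * k ^ (2*k^2/(1-k^2))) : v = k := by
  have hk2 : 0 < 1 - k ^ 2 := by nlinarith [hk.1, hk.2]
  have hmax : 0 < (1 - k^2) * k ^ (2*k^2/(1-k^2)) := mul_pos hk2 (Real.rpow_pos_of_pos hk.1 _)
  have hv0 : 0 < v := by
    by_contra! hv0
    linarith [gfun_nonpos (k := k) ⟨hv.1, hv0⟩]
  by_contra hne
  have hexp : (2*k^2/(1-k^2) + 2) * k ^ 2 = 2*k^2/(1-k^2) := by
    field_simp
    ring
  have := one_sub_sq_mul_rpow_lt_of_ne (by positivity) hk.1.le hexp hv0.le hne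
  rw [← gfun_of_pos hv0] at this
  exact this.ne h

end Gfun

/-- For `k ∈ (0,1)` and `Kₐ` with `|Kₐ| = (1-k²)k^{2k²/(1-k²)}`, the equation
`g(v) = Kₐ` has exactly one solution in `[-1,1]`: `v = k` if `Kₐ > 0`, `v = -k`
if `Kₐ < 0`. -/
theorem stmt9 (k Ka : ℝ) (hk : k ∈ Set.Ioo (0:ℝ) 1)
    (hKa : |Ka| = (1 - k^2) * k ^ (2*k^2/(1-k^2))) :
    (∃! v : ℝ, v ∈ Set.Icc (-1 : ℝ) 1 ∧ gfun k v = Ka) ∧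
    (0 < Ka → gfun k k = Ka) ∧
    (Ka < 0 → gfun k (-k) = Ka) := by
  set M := (1 - k^2) * k ^ (2*k^2/(1-k^2))
  have hM : 0 < M := mul_pos (by nlinarith [hk.1, hk.2]) (Real.rpow_pos_of_pos hk.1 _)
  have hgk : gfun k k = M := gfun_of_pos hk.1
  have hk_mem : k ∈ Icc (-1 : ℝ) 1 := ⟨by linarith [hk.1], hk.2.le⟩
  rcases (abs_eq hM.le).mp hKa with rfl | rfl
  · refine ⟨⟨k, ⟨hk_mem, hgk⟩, fun v hv => eq_of_gfun_eq hk hv.1 hv.2⟩,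
      fun _ => hgk, fun h => absurd h hM.not_gt⟩
  · have hgnk : gfun k (-k) = -M := by rw [gfun_neg, hgk]
    refine ⟨⟨-k, ⟨by rwa [neg_mem_Icc_iff, neg_neg], hgnk⟩, fun v ⟨hv, hgv⟩ => ?_⟩,
      fun h => absurd h (by linarith), fun _ => hgnk⟩
    have : -v = k := eq_of_gfun_eq hk (by rwa [neg_mem_Icc_iff, neg_neg]) (by rw [gfun_neg, hgv, neg_neg])
    linarith
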